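/- arXiv:2510.00281 — 5 statements merged into one kernel-verified Lean document; each statement's English description precedes it below -/
import Mathlib

section
/- Let S be a commutative ring, k and m natural numbers, b : Fin k → S and d : Fin m → S, and let Φ : ((Fin k → S) × S) → ((Fin k → S) × (Fin m → S)) be the S-linear map Φ(x, s) = ((fun i => x i + s * b i), (fun j => s * d j)) given by the block matrix fromBlocks 1 b 0 d. Then ker Φ is a free S-module of rank 1 — that is, there exists an S-linear isomorphism S ≃ ker Φ — if and only if d j = 0 for every j. -/
/-- The `S`-linear map `Φ(x, s) = ((fun i => x i + s * b i), (fun j => s * d j))`,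
i.e. the map given by the block matrix `fromBlocks 1 b 0 d`. -/
def Phi (S : Type*) [CommRing S] {k m : ℕ} (b : Fin k → S) (d : Fin m → S) :
    ((Fin k → S) × S) →ₗ[S] ((Fin k → S) × (Fin m → S)) where
  toFun p := ((fun i => p.1 i + p.2 * b i), (fun j => p.2 * d j))
  map_add' p q := by
    refine Prod.ext ?_ ?_ <;> funext i <;>
      simp only [Prod.fst_add, Prod.snd_add, Pi.add_apply] <;> ring
  map_smul' c p := by
    refine Prod.ext ?_ ?_ <;> funext i <;>
      simp only [Prod.smul_fst, Prod.smul_snd, Pi.smul_apply, smul_eq_mul,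
        RingHom.id_apply] <;> ring

/-- The kernel of the block matrix `fromBlocks 1 b 0 d` is a free `S`-module of rank `1`
(there is an `S`-linear isomorphism `S ≃ ker Φ`) iff `d j = 0` for every `j`. -/
theorem ker_phi_free_rank_one_iff (S : Type*) [CommRing S] (k m : ℕ)
    (b : Fin k → S) (d : Fin m → S) :
    Nonempty (S ≃ₗ[S] LinearMap.ker (Phi S b d)) ↔ ∀ j, d j = 0 := by
  constructor
  · rintro ⟨e⟩ j
    set v : (Fin k → S) × S := ((e 1 : LinearMap.ker (Phi S b d)) : (Fin k → S) × S) with hvdef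
    have hv : Phi S b d v = 0 := (e 1).2
    have hs : v.2 * d j = 0 := by
      have := congrFun (congrArg Prod.snd hv) j
      simpa [Phi] using this
    have hx : ∀ i, v.1 i + v.2 * b i = 0 := fun i => by
      have := congrFun (congrArg Prod.fst hv) i
      simpa [Phi] using this
    apply e.injective
    rw [map_zero]
    have h1 : e (d j) = d j • e 1 := by
      rw [← map_smul]; congr 1; simp
    rw [h1]
    apply Subtype.ext
    show d j • v = (0 : (Fin k → S) × S)
    refine Prod.ext ?_ ?_
    · funext i
      have hv1 : v.1 i = -(v.2 * b i) := eq_neg_of_add_eq_zero_left (hx i)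
      show d j * v.1 i = 0
      calc d j * v.1 i = -(b i) * (v.2 * d j) := by rw [hv1]; ring
        _ = 0 := by rw [hs]; ring
    · show d j * v.2 = 0
      rw [mul_comm]; exact hs
  · intro hd
    have hmem : ∀ s : S, ((fun i => -(s * b i)), s) ∈ LinearMap.ker (Phi S b d) := by
      intro s
      rw [LinearMap.mem_ker]
      refine Prod.ext ?_ ?_ <;> funext i <;> simp [Phi, hd]
    refine ⟨LinearEquiv.ofBijective
      { toFun := fun s => ⟨((fun i => -(s * b i)), s), hmem s⟩
        map_add' := fun s t => by
          refine Subtype.ext (Prod.ext ?_ rfl)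
          funext i; show -((s + t) * b i) = -(s * b i) + -(t * b i); ring
        map_smul' := fun c s => by
          refine Subtype.ext (Prod.ext ?_ rfl)
          funext i; show -((c * s) * b i) = c * -(s * b i); ring } ⟨?_, ?_⟩⟩
    · intro s t h
      have := congrArg (fun p : LinearMap.ker (Phi S b d) => (p : (Fin k → S) × S).2) h
      simpa using this
    · rintro ⟨⟨x, s⟩, hm⟩
      rw [LinearMap.mem_ker] at hm
      have hx : ∀ i, x i + s * b i = 0 := fun i => by
        have := congrFun (congrArg Prod.fst hm) i
        simpa [Phi] using this
      refine ⟨s, Subtype.ext (Prod.ext ?_ rfl)⟩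
      funext i
      show -(s * b i) = x i
      have := hx i; linear_combination -this
end

section
/- Let S be a nontrivial commutative ring, m and n natural numbers with n ≥ 1, and Φ ∈ Matrix (Fin m) (Fin n) S. Let J be the ideal of S generated by the determinants of all (n−1)×(n−1) submatrices Φ.submatrix r c, where r : Fin (n−1) → Fin m and c : Fin (n−1) → Fin n range over all injective maps. Then J = S (the unit ideal) if and only if for every maximal ideal 𝔪 of S, the kernel of the linear map (Fin n → S⧸𝔪) → (Fin m → S⧸𝔪) induced by reducing Φ modulo 𝔪 has dimension at most 1 as a vector space over the residue field S⧸𝔪. -/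
open Module Submodule Matrix

lemma exists_inj_linearIndependent {K V : Type*} [Field K] [AddCommGroup V] [Module K V]
    [FiniteDimensional K V] {ι : Type*} (f : ι → V) {k : ℕ}
    (h : k ≤ finrank K (span K (Set.range f))) :
    ∃ g : Fin k → ι, Function.Injective g ∧ LinearIndependent K (f ∘ g) := by
  obtain ⟨b, hb_sub, hb_span, hb_li⟩ := exists_linearIndependent K (Set.range f)
  have hbfin : b.Finite := hb_li.setFinite
  haveI := hbfin.fintype
  have hcard : finrank K (span K b) = Fintype.card b := by
    rw [finrank_span_set_eq_card hb_li, Set.toFinset_card]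
  have hk : k ≤ Fintype.card b := by rw [← hcard, hb_span]; exact h
  obtain ⟨e⟩ := Function.Embedding.nonempty_of_card_le (by simpa using hk :
    Fintype.card (Fin k) ≤ Fintype.card b)
  have pick : ∀ v : b, ∃ i : ι, f i = (v : V) := fun v => hb_sub v.2
  choose g0 hg0 using pick
  refine ⟨g0 ∘ e, ?_, ?_⟩
  · intro i j hij
    apply e.injective
    have h2 : f (g0 (e i)) = f (g0 (e j)) := congrArg f hij
    rw [hg0, hg0] at h2
    exact Subtype.ext h2
  · have : f ∘ (g0 ∘ e) = (Subtype.val : b → V) ∘ e := by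
      funext i; simp [Function.comp, hg0]
    rw [this]
    exact hb_li.comp e e.injective

/-- Over a field: existence of a nonzero `(n-1)`-minor iff the kernel has dimension at most 1. -/
lemma field_minor_iff_ker {K : Type*} [Field K] {m n : ℕ} (hn : 1 ≤ n)
    (A : Matrix (Fin m) (Fin n) K) :
    (∃ (r : Fin (n - 1) → Fin m) (c : Fin (n - 1) → Fin n),
        Function.Injective r ∧ Function.Injective c ∧ (A.submatrix r c).det ≠ 0) ↔
      finrank K (LinearMap.ker A.mulVecLin) ≤ 1 := by
  have hrn : A.rank + finrank K (LinearMap.ker A.mulVecLin) = n := by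
    rw [Matrix.rank]
    rw [LinearMap.finrank_range_add_finrank_ker A.mulVecLin, Module.finrank_fin_fun]
  constructor
  · rintro ⟨r, c, hr, hc, hdet⟩
    set B := A.submatrix r (id : Fin n → Fin n) with hB
    have hker : LinearMap.ker A.mulVecLin ≤ LinearMap.ker B.mulVecLin := by
      intro x hx
      rw [LinearMap.mem_ker] at hx ⊢
      funext i
      have := congrFun hx (r i)
      simpa [Matrix.mulVecLin_apply, Matrix.mulVec, dotProduct, hB] using this
    have hCunit : IsUnit (A.submatrix r c) :=
      (Matrix.isUnit_iff_isUnit_det _).2 (isUnit_iff_ne_zero.2 hdet)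
    have hrankC : (A.submatrix r c).rank = n - 1 := by
      rw [Matrix.rank_of_isUnit _ hCunit, Fintype.card_fin]
    have hrankB : n - 1 ≤ B.rank := by
      have hle : (A.submatrix r c).rank ≤ B.rank := by
        rw [Matrix.rank_eq_finrank_span_cols, Matrix.rank_eq_finrank_span_cols]
        apply Submodule.finrank_mono
        apply Submodule.span_mono
        rintro _ ⟨j, rfl⟩
        exact ⟨c j, by funext i; simp [hB]⟩
      omega
    have hB2 : B.rank + finrank K (LinearMap.ker B.mulVecLin) = n := by
      rw [Matrix.rank, LinearMap.finrank_range_add_finrank_ker B.mulVecLin,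
        Module.finrank_fin_fun]
    have h1 : finrank K (LinearMap.ker B.mulVecLin) ≤ 1 := by omega
    exact le_trans (Submodule.finrank_mono hker) h1
  · intro h
    have hr : n - 1 ≤ A.rank := by omega
    obtain ⟨c, hc, hcli⟩ := exists_inj_linearIndependent (k := n - 1) (fun j => Aᵀ j)
      (by rw [Matrix.rank_eq_finrank_span_cols] at hr; exact hr)
    set B := A.submatrix (id : Fin m → Fin m) c with hB
    have hBt : Bᵀ = fun j => Aᵀ (c j) := by funext j i; simp [hB]
    have hrankB : B.rank = n - 1 := by
      rw [← Matrix.rank_transpose, hBt]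
      have := (show LinearIndependent K (fun j => Aᵀ (c j)) from hcli).rank_matrix
      rw [Fintype.card_fin] at this
      exact this
    obtain ⟨r, hrinj, hrli⟩ := exists_inj_linearIndependent (k := n - 1) (fun i => B i)
      (by rw [Matrix.rank_eq_finrank_span_row] at hrankB; exact hrankB.ge)
    refine ⟨r, c, hrinj, hc, ?_⟩
    have hru : IsUnit (A.submatrix r c) := by
      rw [← Matrix.linearIndependent_rows_iff_isUnit]
      have : (A.submatrix r c).row = (fun i => B i) ∘ r := by
        funext i j; simp [hB, Matrix.row]
      rw [this]
      exact hrli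
    exact ((Matrix.isUnit_iff_isUnit_det _).1 hru).ne_zero

/-- For a nontrivial commutative ring `S` and a matrix `Φ : Matrix (Fin m) (Fin n) S` with
`n ≥ 1`, the ideal generated by all `(n-1) × (n-1)` minors of `Φ` is the unit ideal iff,
for every maximal ideal `𝔪` of `S`, the kernel of the linear map induced by reducing `Φ`
modulo `𝔪` has dimension at most `1` over the residue field `S ⧸ 𝔪`. -/
theorem fittingIdealOne_eq_top_iff (S : Type*) [CommRing S] [Nontrivial S]
    (m n : ℕ) (hn : 1 ≤ n) (Φ : Matrix (Fin m) (Fin n) S) :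
    Ideal.span { x : S |
        ∃ (r : Fin (n - 1) → Fin m) (c : Fin (n - 1) → Fin n),
          Function.Injective r ∧ Function.Injective c ∧
            x = (Φ.submatrix r c).det } = ⊤ ↔
      ∀ 𝔪 : Ideal S, 𝔪.IsMaximal →
        Module.finrank (S ⧸ 𝔪)
          (LinearMap.ker ((Φ.map (Ideal.Quotient.mk 𝔪)).mulVecLin)) ≤ 1 := by
  set T : Set S := { x : S |
      ∃ (r : Fin (n - 1) → Fin m) (c : Fin (n - 1) → Fin n),
        Function.Injective r ∧ Function.Injective c ∧
          x = (Φ.submatrix r c).det } with hT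
  have key : ∀ 𝔪 : Ideal S, 𝔪.IsMaximal →
      ((¬ T ⊆ 𝔪) ↔ Module.finrank (S ⧸ 𝔪)
        (LinearMap.ker ((Φ.map (Ideal.Quotient.mk 𝔪)).mulVecLin)) ≤ 1) := by
    intro 𝔪 h𝔪
    letI : Field (S ⧸ 𝔪) := Ideal.Quotient.field 𝔪
    rw [← field_minor_iff_ker hn (Φ.map (Ideal.Quotient.mk 𝔪))]
    constructor
    · intro hns
      rw [Set.not_subset] at hns
      obtain ⟨x, hxT, hx𝔪⟩ := hns
      obtain ⟨r, c, hr, hc, rfl⟩ := hxT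
      refine ⟨r, c, hr, hc, ?_⟩
      rw [Matrix.submatrix_map, ← RingHom.mapMatrix_apply, ← RingHom.map_det]
      rwa [Ne, Ideal.Quotient.eq_zero_iff_mem]
    · rintro ⟨r, c, hr, hc, hdet⟩ hsub
      apply hdet
      rw [Matrix.submatrix_map, ← RingHom.mapMatrix_apply, ← RingHom.map_det, Ideal.Quotient.eq_zero_iff_mem]
      exact hsub ⟨r, c, hr, hc, rfl⟩
  constructor
  · intro htop 𝔪 h𝔪
    rw [← key 𝔪 h𝔪]
    intro hsub
    have : Ideal.span T ≤ 𝔪 := Ideal.span_le.2 hsub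
    rw [htop] at this
    exact h𝔪.ne_top (top_le_iff.1 this)
  · intro h
    by_contra htop
    obtain ⟨𝔪, h𝔪, hle⟩ := Ideal.exists_le_maximal _ htop
    exact ((key 𝔪 h𝔪).2 (h 𝔪 h𝔪)) (le_trans Ideal.subset_span hle)
end

section
/- Let C be a field equipped with a multiplicative norm making it a nontrivially normed field whose metric is an ultrametric, assume C is complete and algebraically closed, and fix n ≥ 1. Let f : (Fin n →₀ ℕ) → C tend to 0 along the cofinite filter (a restricted power series in n variables over C). Then there exists x : Fin n → C with ‖x i‖ ≤ 1 for all i such that ‖∑' k, f k * ∏ i, (x i)^(k i)‖ = ⨆ k, ‖f k‖. -/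
open Filter Finset Polynomial

set_option linter.unusedSectionVars false
set_option linter.unusedVariables false

section Aux

variable {C : Type*} [NontriviallyNormedField C] [IsUltrametricDist C]

/-- There are arbitrarily large primes whose image in `C` has norm 1. -/
lemma aux_exists_prime_norm_one (d : ℕ) :
    ∃ q : ℕ, q.Prime ∧ d < q ∧ ‖(q : C)‖ = 1 := by
  obtain ⟨q₁, hq₁le, hq₁⟩ := Nat.exists_infinite_primes (d + 1)
  obtain ⟨q₂, hq₂le, hq₂⟩ := Nat.exists_infinite_primes (q₁ + 1)
  have hne : q₁ ≠ q₂ := by omega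
  have hcop : Nat.Coprime q₁ q₂ := (Nat.coprime_primes hq₁ hq₂).mpr hne
  have hicop : IsCoprime (q₁ : ℤ) (q₂ : ℤ) := Int.isCoprime_iff_gcd_eq_one.mpr hcop
  obtain ⟨u, v, huv⟩ := hicop
  have h1 : (1 : C) = (u : C) * (q₁ : C) + (v : C) * (q₂ : C) := by
    have := congrArg (fun z : ℤ => (z : C)) huv
    push_cast at this
    exact this.symm
  have hle : (1 : ℝ) ≤ max ‖(q₁ : C)‖ ‖(q₂ : C)‖ := by
    calc (1:ℝ) = ‖(u : C) * (q₁ : C) + (v : C) * (q₂ : C)‖ := by rw [← h1, norm_one]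
    _ ≤ max ‖(u : C) * (q₁ : C)‖ ‖(v : C) * (q₂ : C)‖ :=
        IsUltrametricDist.norm_add_le_max _ _
    _ ≤ max ‖(q₁ : C)‖ ‖(q₂ : C)‖ := by
        apply max_le_max <;>
        · rw [norm_mul]
          exact mul_le_of_le_one_left (norm_nonneg _) (IsUltrametricDist.norm_intCast_le_one C _)
  rcases le_max_iff.mp hle with h | h
  · exact ⟨q₁, hq₁, by omega,
      le_antisymm (IsUltrametricDist.norm_natCast_le_one C _) h⟩
  · exact ⟨q₂, hq₂, by omega,
      le_antisymm (IsUltrametricDist.norm_natCast_le_one C _) h⟩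

lemma aux_geom_vanish {q : ℕ} {w : C} (hw : w ≠ 1) (hwq : w ^ q = 1) :
    ∑ j ∈ range q, w ^ j = 0 := by
  have h := geom_sum_mul w q
  rw [hwq, sub_self] at h
  rcases mul_eq_zero.mp h with h | h
  · exact h
  · exact absurd (sub_eq_zero.mp h) hw

lemma aux_exists_zeta [IsAlgClosed C] {q : ℕ} (hq : q.Prime) (hq1 : ‖(q : C)‖ = 1) :
    ∃ ζ : C, ζ ≠ 0 ∧ ‖ζ‖ = 1 ∧ ζ ^ q = 1 ∧ ∀ r : ℕ, 0 < r → r < q → ζ ^ r ≠ 1 := by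
  have hqC : (q : C) ≠ 0 := by
    intro h; rw [h, norm_zero] at hq1; norm_num at hq1
  set P : C[X] := ∑ i ∈ range q, (X : C[X]) ^ i with hP
  have hcoeff : P.coeff 1 = 1 := by
    rw [hP, finset_sum_coeff]
    simp only [coeff_X_pow]
    rw [Finset.sum_ite_eq (range q) 1 (fun _ => (1:C))]
    simp only [if_pos (Finset.mem_range.mpr hq.one_lt)]
  have hdeg : P.degree ≠ 0 := by
    intro h
    have h1 : (1 : WithBot ℕ) ≤ P.degree := le_degree_of_ne_zero (n := 1) (by rw [hcoeff]; norm_num)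
    rw [h] at h1
    exact absurd h1 (by decide)
  obtain ⟨ζ, hζ⟩ := IsAlgClosed.exists_root P hdeg
  have hgeom : ∑ i ∈ range q, ζ ^ i = 0 := by
    have h2 := hζ
    rw [IsRoot, hP] at h2
    simpa [eval_finset_sum] using h2
  have hζq : ζ ^ q = 1 := by
    have h := geom_sum_mul ζ q
    rw [hgeom, zero_mul] at h
    exact sub_eq_zero.mp h.symm
  have hζ1 : ζ ≠ 1 := by
    intro h
    rw [h] at hgeom
    simp only [one_pow, Finset.sum_const, card_range, nsmul_eq_mul, mul_one] at hgeom
    exact hqC hgeom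
  have hζ0 : ζ ≠ 0 := by
    intro h
    rw [h, zero_pow hq.pos.ne'] at hζq
    exact zero_ne_one hζq
  have hζnorm : ‖ζ‖ = 1 := by
    have h : ‖ζ‖ ^ q = 1 := by rw [← norm_pow, hζq, norm_one]
    rcases lt_trichotomy ‖ζ‖ 1 with hlt | heq | hgt
    · have := pow_lt_one₀ (norm_nonneg ζ) hlt hq.pos.ne'
      rw [h] at this; norm_num at this
    · exact heq
    · have := one_lt_pow₀ hgt hq.pos.ne'
      rw [h] at this; norm_num at this
  refine ⟨ζ, hζ0, hζnorm, hζq, ?_⟩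
  intro r hr0 hrq hr1
  have hnd : ¬ q ∣ r := Nat.not_dvd_of_pos_of_lt hr0 hrq
  have hcop : Nat.Coprime q r := (Nat.Prime.coprime_iff_not_dvd hq).mpr hnd
  have hicop : IsCoprime (q : ℤ) (r : ℤ) := Int.isCoprime_iff_gcd_eq_one.mpr hcop
  obtain ⟨u, v, huv⟩ := hicop
  have hz : ζ ^ (u * (q : ℤ) + v * (r : ℤ)) = 1 := by
    rw [zpow_add₀ hζ0, mul_comm u, mul_comm v, zpow_mul, zpow_mul,
      zpow_natCast, zpow_natCast, hζq, hr1, one_zpow, one_zpow, one_mul]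
  rw [huv, zpow_one] at hz
  exact hζ1 hz

lemma aux_digits_inj {n N : ℕ} (a b : Fin n → ℕ) (ha : ∀ i, a i < N) (hb : ∀ i, b i < N)
    (h : ∑ i, a i * N ^ (i : ℕ) = ∑ i, b i * N ^ (i : ℕ)) : a = b := by
  induction n with
  | zero => funext i; exact i.elim0
  | succ m ih =>
    have hN : 0 < N := lt_of_le_of_lt (Nat.zero_le _) (ha 0)
    rw [Fin.sum_univ_succ, Fin.sum_univ_succ] at h
    have h' : a 0 + N * (∑ i : Fin m, a i.succ * N ^ (i : ℕ))
        = b 0 + N * (∑ i : Fin m, b i.succ * N ^ (i : ℕ)) := by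
      simpa [Fin.val_succ, pow_succ, Finset.mul_sum, mul_assoc, mul_comm, mul_left_comm] using h
    have h0 : a 0 = b 0 := by
      have := congrArg (· % N) h'
      simpa [Nat.add_mul_mod_self_left, Nat.mod_eq_of_lt (ha 0), Nat.mod_eq_of_lt (hb 0)]
        using this
    have hrest : ∑ i : Fin m, a i.succ * N ^ (i : ℕ) = ∑ i : Fin m, b i.succ * N ^ (i : ℕ) := by
      rw [h0] at h'
      exact Nat.eq_of_mul_eq_mul_left hN (Nat.add_left_cancel h')
    have htail := ih (fun i => a i.succ) (fun i => b i.succ)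
      (fun i => ha i.succ) (fun i => hb i.succ) hrest
    funext i
    refine Fin.cases h0 (fun j => ?_) i
    exact congrFun htail j

/-- Key one-variable lemma: the Gauss norm of a polynomial is attained on the unit disc. -/
lemma aux_key [IsAlgClosed C] (d : ℕ) (a : ℕ → C) :
    ∃ t : C, ‖t‖ ≤ 1 ∧ ∀ i ≤ d, ‖a i‖ ≤ ‖∑ m ∈ range (d + 1), a m * t ^ m‖ := by
  obtain ⟨q, hq, hdq, hq1⟩ := aux_exists_prime_norm_one (C := C) d
  obtain ⟨ζ, hζ0, hζn, hζq, hζr⟩ := aux_exists_zeta hq hq1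
  set p : ℕ → C := fun j => ∑ m ∈ range (d + 1), a m * (ζ ^ j) ^ m with hp
  have hqne : (range q).Nonempty := ⟨0, Finset.mem_range.mpr hq.pos⟩
  obtain ⟨j₀, hj₀mem, hj₀max⟩ := Finset.exists_max_image (range q) (fun j => ‖p j‖) hqne
  refine ⟨ζ ^ j₀, by rw [norm_pow, hζn, one_pow], ?_⟩
  intro i₀ hi₀
  have hmain : ∑ j ∈ range q, p j * ζ ^ (j * (q - i₀)) = a i₀ * (q : C) := by
    have hstep : ∀ j, p j * ζ ^ (j * (q - i₀))
        = ∑ m ∈ range (d + 1), a m * (ζ ^ (m + (q - i₀))) ^ j := by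
      intro j
      rw [hp, Finset.sum_mul]
      refine Finset.sum_congr rfl fun m _ => ?_
      rw [mul_assoc]
      congr 1
      rw [← pow_mul, ← pow_add, ← pow_mul]
      congr 1
      ring
    calc ∑ j ∈ range q, p j * ζ ^ (j * (q - i₀))
        = ∑ j ∈ range q, ∑ m ∈ range (d + 1), a m * (ζ ^ (m + (q - i₀))) ^ j :=
          Finset.sum_congr rfl fun j _ => hstep j
      _ = ∑ m ∈ range (d + 1), ∑ j ∈ range q, a m * (ζ ^ (m + (q - i₀))) ^ j :=
          Finset.sum_comm
      _ = ∑ m ∈ range (d + 1), a m * ∑ j ∈ range q, (ζ ^ (m + (q - i₀))) ^ j :=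
          Finset.sum_congr rfl fun m _ => (Finset.mul_sum _ _ _).symm
      _ = ∑ m ∈ range (d + 1), (if m = i₀ then a i₀ * (q : C) else 0) := by
          refine Finset.sum_congr rfl fun m hm => ?_
          have hmd : m ≤ d := Nat.lt_succ_iff.mp (Finset.mem_range.mp hm)
          by_cases hmi : m = i₀
          · subst hmi
            have he : m + (q - m) = q := by omega
            rw [if_pos rfl, he, hζq]
            simp
          · rw [if_neg hmi]
            have hw : ∑ j ∈ range q, (ζ ^ (m + (q - i₀))) ^ j = 0 := by
              apply aux_geom_vanish
              · rcases lt_or_gt_of_ne hmi with hlt | hgt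
                · exact hζr _ (by omega) (by omega)
                · have he : m + (q - i₀) = q + (m - i₀) := by omega
                  rw [he, pow_add, hζq, one_mul]
                  exact hζr _ (by omega) (by omega)
              · rw [← pow_mul, mul_comm, pow_mul, hζq, one_pow]
            rw [hw, mul_zero]
      _ = a i₀ * (q : C) := by
          rw [Finset.sum_ite_eq' (range (d + 1)) i₀ (fun _ => a i₀ * (q : C))]
          rw [if_pos (Finset.mem_range.mpr (Nat.lt_succ_of_le hi₀))]
  have h1 : ‖a i₀‖ = ‖∑ j ∈ range q, p j * ζ ^ (j * (q - i₀))‖ := by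
    rw [hmain, norm_mul, hq1, mul_one]
  obtain ⟨j₁, hj₁mem, hj₁⟩ := IsUltrametricDist.exists_norm_finset_sum_le_of_nonempty
      hqne (fun j => p j * ζ ^ (j * (q - i₀)))
  rw [h1]
  calc ‖∑ j ∈ range q, p j * ζ ^ (j * (q - i₀))‖ ≤ ‖p j₁ * ζ ^ (j₁ * (q - i₀))‖ := hj₁
    _ = ‖p j₁‖ := by rw [norm_mul, norm_pow, hζn, one_pow, mul_one]
    _ ≤ ‖p j₀‖ := hj₀max j₁ hj₁mem
    _ = ‖∑ m ∈ range (d + 1), a m * (ζ ^ j₀) ^ m‖ := rfl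

end Aux

/-- Over a complete, algebraically closed, nonarchimedean nontrivially normed field `C`,
a restricted power series `f` in `n ≥ 1` variables (coefficients tending to `0` along the
cofinite filter) attains the supremum of its coefficient norms as the norm of one of its
values on the closed unit polydisc. -/
theorem restrictedPowerSeries_norm_attained (C : Type*) [NontriviallyNormedField C]
    [IsUltrametricDist C] [CompleteSpace C] [IsAlgClosed C] (n : ℕ) (hn : 1 ≤ n)
    (f : (Fin n →₀ ℕ) → C) (hf : Tendsto f cofinite (nhds 0)) :
    ∃ x : Fin n → C, (∀ i, ‖x i‖ ≤ 1) ∧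
      ‖∑' k, f k * ∏ i, x i ^ (k i)‖ = ⨆ k, ‖f k‖ := by
  by_cases hf0 : ∀ k, f k = 0
  · refine ⟨0, by simp, ?_⟩
    simp [hf0, ciSup_const]
  push_neg at hf0
  obtain ⟨k₁, hk₁⟩ := hf0
  -- finiteness of superlevel sets
  have hfin : ∀ ε : ℝ, 0 < ε → {k | ε ≤ ‖f k‖}.Finite := by
    intro ε hε
    have h1 : f ⁻¹' Metric.ball 0 ε ∈ cofinite := hf (Metric.ball_mem_nhds (0 : C) hε)
    rw [Filter.mem_cofinite] at h1
    refine h1.subset ?_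
    intro k hk
    simp only [Set.mem_compl_iff, Set.mem_preimage, Metric.mem_ball, dist_zero_right, not_lt]
    exact hk
  -- the maximum of the coefficient norms
  have hε₁ : 0 < ‖f k₁‖ := norm_pos_iff.mpr hk₁
  obtain ⟨k₀, hk₀mem, hk₀max⟩ := Finset.exists_max_image ((hfin _ hε₁).toFinset)
    (fun k => ‖f k‖) ⟨k₁, by simp⟩
  have hM : ∀ k, ‖f k‖ ≤ ‖f k₀‖ := by
    intro k
    by_cases hk : ‖f k₁‖ ≤ ‖f k‖
    · exact hk₀max k (by simpa using hk)
    · exact (not_le.mp hk).le.trans (hk₀max k₁ (by simp))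
  set M := ‖f k₀‖ with hMdef
  have hMpos : 0 < M := hε₁.trans_le (hM k₁)
  have hbdd : BddAbove (Set.range fun k => ‖f k‖) := ⟨M, by rintro _ ⟨k, rfl⟩; exact hM k⟩
  have hsup : (⨆ k, ‖f k‖) = M := le_antisymm (ciSup_le hM) (le_ciSup hbdd k₀)
  -- the finite set of coefficients of maximal norm
  have hSfin : {k | ‖f k‖ = M}.Finite :=
    (hfin M hMpos).subset (fun k hk => le_of_eq hk.symm)
  set S : Finset (Fin n →₀ ℕ) := hSfin.toFinset with hSdef
  have hk₀S : k₀ ∈ S := by simp [hSdef, hMdef]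
  have hSmem : ∀ k, k ∈ S ↔ ‖f k‖ = M := by intro k; simp [hSdef]
  -- tail bound
  have hcc : ∃ c : ℝ, 0 ≤ c ∧ c < M ∧ ∀ k, k ∉ S → ‖f k‖ ≤ c := by
    set B : Finset (Fin n →₀ ℕ) := (hfin (M / 2) (by linarith)).toFinset \ S with hBdef
    have hBmem : ∀ k, k ∈ B ↔ (M / 2 ≤ ‖f k‖ ∧ k ∉ S) := by intro k; simp [hBdef]
    rcases B.eq_empty_or_nonempty with hB | hB
    · refine ⟨M / 2, by linarith, by linarith, fun k hk => ?_⟩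
      by_contra hc
      push_neg at hc
      have : k ∈ B := (hBmem k).mpr ⟨hc.le, hk⟩
      rw [hB] at this
      exact absurd this (Finset.notMem_empty k)
    · obtain ⟨k₂, hk₂B, hk₂max⟩ := B.exists_max_image (fun k => ‖f k‖) hB
      have hk₂M : ‖f k₂‖ < M :=
        lt_of_le_of_ne (hM k₂) (fun h => ((hBmem k₂).mp hk₂B).2 ((hSmem k₂).mpr h))
      refine ⟨max (M / 2) ‖f k₂‖, le_max_of_le_left (by linarith),
        max_lt (by linarith) hk₂M, fun k hk => ?_⟩
      by_cases h2 : M / 2 ≤ ‖f k‖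
      · exact le_max_of_le_right (hk₂max k ((hBmem k).mpr ⟨h2, hk⟩))
      · exact le_max_of_le_left (not_le.mp h2).le
  obtain ⟨c, hc0, hcM, hcS⟩ := hcc
  -- the base for the Kronecker substitution
  set N : ℕ := 1 + S.sup (fun k => Finset.univ.sup fun i => k i) with hNdef
  have hkN : ∀ k ∈ S, ∀ i, k i < N := by
    intro k hk i
    have h1 : k i ≤ Finset.univ.sup (fun i => k i) := Finset.le_sup (Finset.mem_univ i)
    have h2 : Finset.univ.sup (fun i => k i) ≤ S.sup (fun k => Finset.univ.sup fun i => k i) :=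
      Finset.le_sup (f := fun k => Finset.univ.sup fun i => k i) hk
    omega
  set e : (Fin n →₀ ℕ) → ℕ := fun k => ∑ i, k i * N ^ (i : ℕ) with hedef
  have hei : ∀ k ∈ S, ∀ k' ∈ S, e k = e k' → k = k' := by
    intro k hk k' hk' h
    have := aux_digits_inj (fun i => k i) (fun i => k' i) (hkN k hk) (hkN k' hk') h
    exact DFunLike.ext _ _ fun i => congrFun this i
  set d : ℕ := S.sup e with hddef
  set a : ℕ → C := fun m => ∑ k ∈ S.filter (fun k => e k = m), f k with hadef
  have hGsum : ∀ t : C, ∑ m ∈ range (d + 1), a m * t ^ m = ∑ k ∈ S, f k * t ^ (e k) := by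
    intro t
    have h1 := Finset.sum_fiberwise_of_maps_to (g := e) (s := S) (t := range (d + 1))
      (fun k hk => Finset.mem_range.mpr (Nat.lt_succ_of_le (Finset.le_sup hk)))
      (fun k => f k * t ^ (e k))
    rw [← h1]
    refine Finset.sum_congr rfl fun m _ => ?_
    rw [hadef, Finset.sum_mul]
    refine Finset.sum_congr rfl fun k hk => ?_
    rw [(Finset.mem_filter.mp hk).2]
  have hfib : S.filter (fun k => e k = e k₀) = {k₀} := by
    ext k
    simp only [Finset.mem_filter, Finset.mem_singleton]
    constructor
    · rintro ⟨hk, hke⟩; exact hei k hk k₀ hk₀S hke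
    · rintro rfl; exact ⟨hk₀S, rfl⟩
  have hak₀ : a (e k₀) = f k₀ := by simp only [hadef]; rw [hfib, Finset.sum_singleton]
  -- apply the key one-variable lemma
  obtain ⟨t, ht1, hta⟩ := aux_key d a
  have hek₀d : e k₀ ≤ d := Finset.le_sup hk₀S
  have htpow : ∀ m : ℕ, ‖t ^ m‖ ≤ 1 := fun m => by
    rw [norm_pow]; exact pow_le_one₀ (norm_nonneg t) ht1
  have hGt : ‖∑ k ∈ S, f k * t ^ (e k)‖ = M := by
    refine le_antisymm ?_ ?_
    · refine IsUltrametricDist.norm_sum_le_of_forall_le_of_nonneg hMpos.le fun k hk => ?_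
      rw [norm_mul]
      exact mul_le_of_le_one_right (norm_nonneg _) (htpow _) |>.trans
        (by rw [(hSmem k).mp hk])
    · have := hta (e k₀) hek₀d
      rw [hak₀, ← hMdef] at this
      rwa [hGsum t] at this
  -- the evaluation point
  refine ⟨fun i => t ^ (N ^ (i : ℕ)), fun i => htpow _, ?_⟩
  have hprod : ∀ k : Fin n →₀ ℕ, (∏ i : Fin n, (t ^ (N ^ (i : ℕ))) ^ (k i)) = t ^ (e k) := by
    intro k
    rw [hedef]
    simp_rw [← pow_mul]
    rw [Finset.prod_pow_eq_pow_sum]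
    congr 1
    exact Finset.sum_congr rfl fun i _ => by ring
  have hsummable : Summable (fun k => f k * ∏ i : Fin n, (t ^ (N ^ (i : ℕ))) ^ (k i)) := by
    apply NonarchimedeanAddGroup.summable_of_tendsto_cofinite_zero
    rw [tendsto_zero_iff_norm_tendsto_zero]
    have hb : ∀ k, ‖f k * ∏ i : Fin n, (t ^ (N ^ (i : ℕ))) ^ (k i)‖ ≤ ‖f k‖ := by
      intro k
      rw [hprod k, norm_mul]
      exact mul_le_of_le_one_right (norm_nonneg _) (htpow _)
    exact squeeze_zero (fun k => norm_nonneg _) hb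
      (tendsto_zero_iff_norm_tendsto_zero.mp hf)
  have hsplit := Summable.sum_add_tsum_compl (s := S) hsummable
  have htail : ‖∑' k : ↑((S : Set (Fin n →₀ ℕ))ᶜ), f (k : Fin n →₀ ℕ) *
      ∏ i : Fin n, (t ^ (N ^ (i : ℕ))) ^ ((k : Fin n →₀ ℕ) i)‖ ≤ c := by
    refine IsUltrametricDist.norm_tsum_le_of_forall_le_of_nonneg hc0 fun k => ?_
    have hknS : (k : Fin n →₀ ℕ) ∉ S := fun hc => k.2 (Finset.mem_coe.mpr hc)
    rw [hprod, norm_mul]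
    exact (mul_le_of_le_one_right (norm_nonneg _) (htpow _)).trans (hcS _ hknS)
  have hmainsum : ∑ k ∈ S, f k * ∏ i : Fin n, (t ^ (N ^ (i : ℕ))) ^ (k i)
      = ∑ k ∈ S, f k * t ^ (e k) :=
    Finset.sum_congr rfl fun k _ => by rw [hprod]
  rw [← hsplit, hsup]
  have hmainnorm : ‖∑ k ∈ S, f k * ∏ i : Fin n, (t ^ (N ^ (i : ℕ))) ^ (k i)‖ = M := by
    rw [hmainsum]; exact hGt
  have htl : ‖∑' k : ↑((S : Set (Fin n →₀ ℕ))ᶜ), f (k : Fin n →₀ ℕ) *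
      ∏ i : Fin n, (t ^ (N ^ (i : ℕ))) ^ ((k : Fin n →₀ ℕ) i)‖ < M := htail.trans_lt hcM
  rw [IsUltrametricDist.norm_add_eq_max_of_norm_ne_norm (by rw [hmainnorm]; exact htl.ne'),
    hmainnorm, max_eq_left htl.le]
end

section
/- Let C be a field equipped with a multiplicative norm making it a nontrivially normed field whose metric is an ultrametric, assume C is complete and algebraically closed, and fix n ≥ 1. Let f : (Fin n →₀ ℕ) → C tend to 0 along the cofinite filter (a restricted power series in n variables over C) and suppose f k₀ ≠ 0 for some k₀. Then for every x₀ : Fin n → C with ‖x₀ i‖ ≤ 1 for all i and every real number r with 0 < r ≤ 1, there exists x : Fin n → C with ‖x i − x₀ i‖ ≤ r for all i (hence ‖x i‖ ≤ 1 for all i) such that ∑' k, f k * ∏ i, (x i)^(k i) ≠ 0. In other words, the zero locus of a nonzero restricted power series contains no closed polydisc of positive radius inside the closed unit polydisc. -/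
open Filter

set_option linter.unusedSectionVars false

section RPSHelpers

variable {C : Type*} [NontriviallyNormedField C] [IsUltrametricDist C] [CompleteSpace C]

lemma rps_summable {ι : Type*} {f : ι → C} (hf : Tendsto f cofinite (nhds 0)) : Summable f :=
  NonarchimedeanAddGroup.summable_of_tendsto_cofinite_zero hf

lemma rps_tendsto_of_finite {ι : Type*} {f : ι → C}
    (h : ∀ ε : ℝ, 0 < ε → {i | ε ≤ ‖f i‖}.Finite) : Tendsto f cofinite (nhds 0) := by
  rw [Metric.tendsto_nhds]
  intro ε hε
  rw [eventually_cofinite]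
  simpa [dist_zero_right, not_lt] using h ε hε

lemma rps_finite_of_tendsto {ι : Type*} {f : ι → C} (hf : Tendsto f cofinite (nhds 0))
    {ε : ℝ} (hε : 0 < ε) : {i | ε ≤ ‖f i‖}.Finite := by
  have h := hf (Metric.ball_mem_nhds (0 : C) hε)
  rw [mem_map, mem_cofinite] at h
  refine h.subset fun i hi => ?_
  simp only [Set.mem_compl_iff, Set.mem_preimage, Metric.mem_ball, dist_zero_right, not_lt]
  exact hi

lemma rps_norm_mul_le_one (a b : C) (hb : ‖b‖ ≤ 1) : ‖a * b‖ ≤ ‖a‖ := by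
  rw [norm_mul]
  exact mul_le_of_le_one_right (norm_nonneg a) hb

lemma rps_bound {ι : Type*} [Fintype ι] (c : C) (x : ι → C) (hx : ∀ i, ‖x i‖ ≤ 1)
    (k : ι → ℕ) : ‖c * ∏ i, x i ^ k i‖ ≤ ‖c‖ := by
  refine rps_norm_mul_le_one _ _ ?_
  rw [norm_prod]
  refine Finset.prod_le_one (fun i _ => by positivity) (fun i _ => ?_)
  rw [norm_pow]
  exact pow_le_one₀ (norm_nonneg _) (hx i)

/-- If a restricted power series in one variable vanishes at every nonzero point of
the closed disc of radius `δ ≤ 1` around `0`, then all its coefficients vanish. -/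
lemma rps_coeff_zero_of_vanishing {a : ℕ → C} (ha : Tendsto a cofinite (nhds 0))
    {δ : ℝ} (hδ : 0 < δ) (hδ1 : δ ≤ 1)
    (hv : ∀ t : C, t ≠ 0 → ‖t‖ ≤ δ → ∑' j, a j * t ^ j = 0) : ∀ j, a j = 0 := by
  obtain ⟨B, hB⟩ : ∃ B : ℝ, ∀ i, ‖a i‖ ≤ B := by
    obtain ⟨B, hB⟩ := ha.norm.bddAbove_range_of_cofinite
    exact ⟨B, fun i => hB ⟨i, rfl⟩⟩
  have hB0 : 0 ≤ B := le_trans (norm_nonneg _) (hB 0)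
  have hB1 : 0 < B + 1 := by linarith
  intro j
  induction j using Nat.strong_induction_on with
  | _ j ih =>
  by_contra haj
  have haj' : 0 < ‖a j‖ / (B + 1) := by
    apply div_pos (norm_pos_iff.mpr haj) hB1
  obtain ⟨t, ht0, htlt⟩ := NormedField.exists_norm_lt C (lt_min hδ haj')
  have htne : t ≠ 0 := norm_pos_iff.mp ht0
  have htδ : ‖t‖ ≤ δ := le_of_lt (lt_of_lt_of_le htlt (min_le_left _ _))
  have ht1 : ‖t‖ ≤ 1 := le_trans htδ hδ1
  have hterm : ∀ i : ℕ, ∀ m : ℕ, ‖a i * t ^ m‖ ≤ ‖a i‖ := by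
    intro i m
    refine rps_norm_mul_le_one _ _ ?_
    rw [norm_pow]
    exact pow_le_one₀ (norm_nonneg _) ht1
  have hsum : Summable fun i => a i * t ^ i :=
    rps_summable (squeeze_zero_norm (fun i => hterm i i) (by simpa using ha.norm))
  have hsum' : Summable fun i => a (i + j) * t ^ i := by
    refine rps_summable (squeeze_zero_norm (fun i => hterm _ i) ?_)
    have : Tendsto (fun i : ℕ => a (i + j)) cofinite (nhds 0) :=
      ha.comp (Function.Injective.tendsto_cofinite (add_left_injective j))
    simpa using this.norm
  have h1 : ∑' i, a i * t ^ i = 0 := hv t htne htδ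
  have h2 : ∑' i, a (i + j) * t ^ (i + j) = 0 := by
    have h3 := Summable.sum_add_tsum_nat_add (f := fun i => a i * t ^ i) j hsum
    rw [h1] at h3
    have h4 : ∑ i ∈ Finset.range j, a i * t ^ i = 0 :=
      Finset.sum_eq_zero fun i hi => by rw [ih i (Finset.mem_range.mp hi), zero_mul]
    linear_combination (norm := module) h3 - h4
  have h5 : ∑' i, a (i + j) * t ^ i = 0 := by
    have : ∑' i, a (i + j) * t ^ (i + j) = t ^ j * ∑' i, a (i + j) * t ^ i := by
      rw [← tsum_mul_left]
      exact tsum_congr fun i => by ring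
    rw [this] at h2
    rcases mul_eq_zero.mp h2 with h | h
    · exact absurd h (pow_ne_zero _ htne)
    · exact h
  have h6 := Summable.sum_add_tsum_nat_add (f := fun i => a (i + j) * t ^ i) 1 hsum'
  rw [h5] at h6
  simp only [Finset.range_one, Finset.sum_singleton, pow_zero, mul_one, zero_add] at h6
  -- h6 : a j + ∑' i, a (i + 1 + j) * t ^ (i + 1) = 0
  have h7 : ‖a j‖ ≤ B * ‖t‖ := by
    have hneg : a j = -∑' i, a (i + 1 + j) * t ^ (i + 1) := eq_neg_of_add_eq_zero_left h6
    rw [hneg, norm_neg]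
    refine IsUltrametricDist.norm_tsum_le_of_forall_le_of_nonneg
      (by positivity) (fun i => ?_)
    rw [norm_mul, norm_pow]
    refine mul_le_mul (hB _) ?_ (by positivity) hB0
    calc ‖t‖ ^ (i + 1) ≤ ‖t‖ ^ 1 := pow_le_pow_of_le_one (norm_nonneg _) ht1 (by omega)
      _ = ‖t‖ := pow_one _
  have h8 : ‖t‖ * (B + 1) < ‖a j‖ := by
    have := htlt.trans_le (min_le_right _ _)
    rwa [lt_div_iff₀ hB1] at this
  nlinarith [ht0.le, norm_nonneg (a j)]

set_option maxHeartbeats 1000000 in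
/-- Recentering identity. -/
lemma rps_shift_eval {a : ℕ → C} (ha : Tendsto a cofinite (nhds 0)) {t₀ : C} (ht₀ : ‖t₀‖ ≤ 1)
    {u : C} (hu : ‖u‖ ≤ 1) :
    ∑' j, a j * (t₀ + u) ^ j
      = ∑' m, (∑' j, a j * (j.choose m : C) * t₀ ^ (j - m)) * u ^ m := by
  set F : ℕ × ℕ → C := fun p => a p.1 * (p.1.choose p.2 : C) * t₀ ^ (p.1 - p.2) * u ^ p.2 with hF
  have hFnorm : ∀ p : ℕ × ℕ, ‖F p‖ ≤ ‖a p.1‖ := by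
    intro p
    refine le_trans (rps_norm_mul_le_one _ _ ?_) ?_
    · rw [norm_pow]; exact pow_le_one₀ (norm_nonneg _) hu
    refine le_trans (rps_norm_mul_le_one _ _ ?_) (rps_norm_mul_le_one _ _ ?_)
    · rw [norm_pow]; exact pow_le_one₀ (norm_nonneg _) ht₀
    · exact IsUltrametricDist.norm_natCast_le_one C _
  have hFt : Tendsto F cofinite (nhds 0) := by
    refine rps_tendsto_of_finite fun ε hε => ?_
    have hfin := rps_finite_of_tendsto ha hε
    obtain ⟨N, hN⟩ := hfin.bddAbove
    refine Set.Finite.subset (Set.Finite.prod hfin (Set.finite_Iic N)) ?_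
    intro p hp
    have hp1 : ε ≤ ‖a p.1‖ := le_trans hp (hFnorm p)
    have hle : p.2 ≤ p.1 := by
      by_contra hgt
      rw [not_le] at hgt
      have : F p = 0 := by
        simp [hF, Nat.choose_eq_zero_of_lt hgt]
      rw [Set.mem_setOf_eq, this, norm_zero] at hp
      linarith
    exact ⟨hp1, le_trans hle (hN hp1)⟩
  have hFs : Summable F := rps_summable hFt
  have h1 : ∀ j, ∑' m, F (j, m) = a j * (t₀ + u) ^ j := by
    intro j
    rw [tsum_eq_sum (s := Finset.range (j + 1))
      (fun m hm => by
        have : j < m := by simpa using Nat.lt_of_succ_le (not_lt.mp (by simpa using hm))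
        simp [hF, Nat.choose_eq_zero_of_lt this])]
    rw [add_comm t₀ u, add_pow, Finset.mul_sum]
    refine Finset.sum_congr rfl fun m hm => ?_
    push_cast
    ring
  have h2 : ∀ m, ∑' j, F (j, m) = (∑' j, a j * (j.choose m : C) * t₀ ^ (j - m)) * u ^ m := by
    intro m
    rw [← tsum_mul_right]
  calc ∑' j, a j * (t₀ + u) ^ j = ∑' j, ∑' m, F (j, m) := by
        exact (tsum_congr h1).symm
    _ = ∑' m, ∑' j, F (j, m) := by
        have hFs' : Summable (Function.uncurry fun j m => F (j, m)) := hFs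
        exact (Summable.tsum_comm' hFs' hFs'.prod_factor hFs'.prod_symm.prod_factor).symm
    _ = ∑' m, (∑' j, a j * (j.choose m : C) * t₀ ^ (j - m)) * u ^ m := tsum_congr h2

/-- One-variable case. -/
lemma rps_one_var {a : ℕ → C} (ha : Tendsto a cofinite (nhds 0)) (hne : ∃ j, a j ≠ 0)
    {t₀ : C} (ht₀ : ‖t₀‖ ≤ 1) {r : ℝ} (hr : 0 < r) (hr1 : r ≤ 1) :
    ∃ t : C, ‖t - t₀‖ ≤ r ∧ ‖t‖ ≤ 1 ∧ ∑' j, a j * t ^ j ≠ 0 := by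
  by_contra hcon
  push_neg at hcon
  set c : ℕ → C := fun m => ∑' j, a j * (j.choose m : C) * t₀ ^ (j - m) with hc
  have hcterm : ∀ j m : ℕ, ‖a j * (j.choose m : C) * t₀ ^ (j - m)‖ ≤ ‖a j‖ := by
    intro j m
    refine le_trans (rps_norm_mul_le_one _ _ ?_) (rps_norm_mul_le_one _ _ ?_)
    · rw [norm_pow]; exact pow_le_one₀ (norm_nonneg _) ht₀
    · exact IsUltrametricDist.norm_natCast_le_one C _
  have hct : Tendsto c cofinite (nhds 0) := by
    refine rps_tendsto_of_finite fun ε hε => ?_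
    have hfin := rps_finite_of_tendsto ha (half_pos hε)
    obtain ⟨N, hN⟩ := hfin.bddAbove
    refine Set.Finite.subset (Set.finite_Iic N) fun m hm => ?_
    rw [Set.mem_Iic]
    by_contra hgt
    rw [not_le] at hgt
    have hcm : ‖c m‖ ≤ ε / 2 := by
      refine IsUltrametricDist.norm_tsum_le_of_forall_le_of_nonneg (by positivity) fun j => ?_
      rcases lt_or_ge j m with hj | hj
      · simp [Nat.choose_eq_zero_of_lt hj]
        positivity
      · refine le_trans (hcterm j m) ?_
        by_contra hja
        rw [not_le] at hja
        exact absurd (hN (le_of_lt hja : (ε/2:ℝ) ≤ ‖a j‖)) (by omega)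
    have hm' : ε ≤ ‖c m‖ := hm
    linarith
  have hczero : ∀ m, c m = 0 := by
    refine rps_coeff_zero_of_vanishing hct hr hr1 fun u hu0 hu => ?_
    rw [← rps_shift_eval ha ht₀ (le_trans hu hr1)]
    refine hcon (t₀ + u) ?_ ?_
    · simpa using hu
    · exact le_trans (IsUltrametricDist.norm_add_le_max _ _) (max_le ht₀ (le_trans hu hr1))
  have hazero : ∀ j, a j = 0 := by
    refine rps_coeff_zero_of_vanishing ha one_pos le_rfl fun t ht0 ht1 => ?_
    have hu : ‖t - t₀‖ ≤ 1 := by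
      rw [sub_eq_add_neg]
      refine le_trans (IsUltrametricDist.norm_add_le_max _ _) (max_le ht1 ?_)
      rwa [norm_neg]
    have := rps_shift_eval ha ht₀ hu
    rw [add_sub_cancel] at this
    rw [this]
    have : ∀ m : ℕ, c m * (t - t₀) ^ m = 0 := fun m => by rw [hczero m, zero_mul]
    simpa [hc] using tsum_congr this ▸ tsum_zero
  obtain ⟨j, hj⟩ := hne
  exact hj (hazero j)

noncomputable def finsuppConsEquiv (n : ℕ) : ℕ × (Fin n →₀ ℕ) ≃ (Fin (n + 1) →₀ ℕ) where
  toFun p := Finsupp.cons p.1 p.2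
  invFun k := (k 0, Finsupp.tail k)
  left_inv p := by
    obtain ⟨j, k'⟩ := p
    simp [Finsupp.cons_zero, Finsupp.tail_cons]
  right_inv k := by simp [Finsupp.cons_tail]

@[simp] lemma finsuppConsEquiv_apply (n : ℕ) (p : ℕ × (Fin n →₀ ℕ)) :
    finsuppConsEquiv n p = Finsupp.cons p.1 p.2 := rfl


lemma rps_fubini (n : ℕ) (G : (Fin (n + 1) →₀ ℕ) → C) (hsum : Summable G) :
    ∑' k, G k = ∑' (j : ℕ) (k' : Fin n →₀ ℕ), G (Finsupp.cons j k') := by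
  have hsum' : Summable fun p : ℕ × (Fin n →₀ ℕ) => G (finsuppConsEquiv n p) :=
    (Equiv.summable_iff _).mpr hsum
  calc ∑' k, G k = ∑' p : ℕ × (Fin n →₀ ℕ), G (finsuppConsEquiv n p) :=
        ((finsuppConsEquiv n).tsum_eq G).symm
    _ = ∑' (j : ℕ) (k' : Fin n →₀ ℕ), G (finsuppConsEquiv n (j, k')) :=
        Summable.tsum_prod' hsum' hsum'.prod_factor
    _ = ∑' (j : ℕ) (k' : Fin n →₀ ℕ), G (Finsupp.cons j k') := rfl


set_option maxHeartbeats 800000 in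
lemma rps_main (n : ℕ) : ∀ f : (Fin n →₀ ℕ) → C, Tendsto f cofinite (nhds 0) →
    (∃ k₀, f k₀ ≠ 0) → ∀ x₀ : Fin n → C, (∀ i, ‖x₀ i‖ ≤ 1) → ∀ r : ℝ, 0 < r → r ≤ 1 →
    ∃ x : Fin n → C, (∀ i, ‖x i - x₀ i‖ ≤ r) ∧ (∀ i, ‖x i‖ ≤ 1) ∧
      ∑' k, f k * ∏ i, x i ^ k i ≠ 0 := by
  induction n with
  | zero =>
    intro f hf hne x₀ hx₀ r hr hr1
    obtain ⟨k₀, hk₀⟩ := hne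
    refine ⟨x₀, fun i => by simpa using hr.le, hx₀, ?_⟩
    have h1 : ∑' k, f k * ∏ i, x₀ i ^ k i = f k₀ * ∏ i, x₀ i ^ k₀ i :=
      tsum_eq_single k₀ fun b hb => absurd (Subsingleton.elim b k₀) hb
    rw [h1]
    simpa using hk₀
  | succ n ih =>
    intro f hf hne x₀ hx₀ r hr hr1
    obtain ⟨k₀, hk₀⟩ := hne
    set g : (Fin n →₀ ℕ) → C := fun k' => f (Finsupp.cons (k₀ 0) k') with hg_def
    have hg : Tendsto g cofinite (nhds 0) := by
      refine hf.comp (Function.Injective.tendsto_cofinite ?_)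
      exact fun k₁ k₂ h => by
        have := congrArg Finsupp.tail h
        rwa [Finsupp.tail_cons, Finsupp.tail_cons] at this
    have hgne : ∃ k', g k' ≠ 0 :=
      ⟨Finsupp.tail k₀, by rw [hg_def]; simpa [Finsupp.cons_tail] using hk₀⟩
    obtain ⟨x', hx'r, hx'1, hx'ne⟩ :=
      ih g hg hgne (fun i => x₀ i.succ) (fun i => hx₀ _) r hr hr1
    set a : ℕ → C := fun j => ∑' k', f (Finsupp.cons j k') * ∏ i, x' i ^ k' i with ha_def
    have ha_ne : ∃ j, a j ≠ 0 := ⟨k₀ 0, hx'ne⟩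
    have ha : Tendsto a cofinite (nhds 0) := by
      refine rps_tendsto_of_finite fun ε hε => ?_
      have hfin := rps_finite_of_tendsto hf (half_pos hε)
      refine Set.Finite.subset (hfin.image fun k => k 0) fun j hj => ?_
      by_contra hjim
      have hb : ∀ k', ‖f (Finsupp.cons j k') * ∏ i, x' i ^ k' i‖ ≤ ε / 2 := by
        intro k'
        refine le_trans (rps_bound _ _ hx'1 _) ?_
        by_contra hlt
        rw [not_le] at hlt
        exact hjim ⟨Finsupp.cons j k', hlt.le, Finsupp.cons_zero _ _⟩
      have : ‖a j‖ ≤ ε / 2 :=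
        IsUltrametricDist.norm_tsum_le_of_forall_le_of_nonneg (by positivity) hb
      have hj' : ε ≤ ‖a j‖ := hj
      linarith
    obtain ⟨t, htr, ht1, htne⟩ := rps_one_var ha ha_ne (hx₀ 0) hr hr1
    set x : Fin (n + 1) → C := Fin.cons t x' with hx_def
    have hprod : ∀ (j : ℕ) (k' : Fin n →₀ ℕ),
        ∏ i, x i ^ (Finsupp.cons j k') i = t ^ j * ∏ i, x' i ^ k' i := by
      intro j k'
      rw [Fin.prod_univ_succ]
      simp [hx_def, Finsupp.cons_zero, Finsupp.cons_succ]
    have hx1 : ∀ i, ‖x i‖ ≤ 1 := by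
      intro i
      refine Fin.cases ?_ ?_ i
      · simpa [hx_def] using ht1
      · intro i; simpa [hx_def] using hx'1 i
    refine ⟨x, ?_, hx1, ?_⟩
    · intro i
      refine Fin.cases ?_ ?_ i
      · simpa [hx_def] using htr
      · intro i; simpa [hx_def] using hx'r i
    · -- Fubini
      have hterm : Tendsto (fun k => f k * ∏ i, x i ^ k i) cofinite (nhds 0) := by
        refine squeeze_zero_norm (fun k => rps_bound _ _ hx1 _) ?_
        simpa using hf.norm
      have hsum : Summable fun k => f k * ∏ i, x i ^ k i := rps_summable hterm
      have hkey : (∑' k, f k * ∏ i, x i ^ k i)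
          = ∑' (j : ℕ) (k' : Fin n →₀ ℕ),
              f (Finsupp.cons j k') * ∏ i, x i ^ (Finsupp.cons j k') i :=
        rps_fubini n _ hsum
      have h2 : ∀ j : ℕ,
          (∑' k' : Fin n →₀ ℕ, f (Finsupp.cons j k') * ∏ i, x i ^ (Finsupp.cons j k') i)
            = a j * t ^ j := by
        intro j
        have h3 : ∀ k' : Fin n →₀ ℕ,
            f (Finsupp.cons j k') * ∏ i, x i ^ (Finsupp.cons j k') i
              = (f (Finsupp.cons j k') * ∏ i, x' i ^ k' i) * t ^ j := by
          intro k'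
          rw [hprod j k']
          ring
        rw [tsum_congr h3, tsum_mul_right, ha_def]
      rw [hkey, tsum_congr h2]
      exact htne

end RPSHelpers

/-- Over a complete, algebraically closed, nonarchimedean nontrivially normed field `C`,
the zero locus of a nonzero restricted power series in `n ≥ 1` variables contains no
closed polydisc of positive radius `r ≤ 1` inside the closed unit polydisc: around any
center `x₀` of the closed unit polydisc one can find `x` with `‖x i − x₀ i‖ ≤ r` (hence
`‖x i‖ ≤ 1`) at which the series does not vanish. -/
theorem restrictedPowerSeries_nonvanishing_on_polydisc (C : Type*)
    [NontriviallyNormedField C] [IsUltrametricDist C] [CompleteSpace C] [IsAlgClosed C]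
    (n : ℕ) (hn : 1 ≤ n) (f : (Fin n →₀ ℕ) → C) (hf : Tendsto f cofinite (nhds 0))
    (hne : ∃ k₀, f k₀ ≠ 0) :
    ∀ (x₀ : Fin n → C), (∀ i, ‖x₀ i‖ ≤ 1) →
      ∀ r : ℝ, 0 < r → r ≤ 1 →
        ∃ x : Fin n → C, (∀ i, ‖x i - x₀ i‖ ≤ r) ∧ (∀ i, ‖x i‖ ≤ 1) ∧
          ∑' k, f k * ∏ i, x i ^ (k i) ≠ 0 := by
  intro x₀ hx₀ r hr hr1
  exact rps_main n f hf hne x₀ hx₀ r hr hr1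
end

section
/- Let C be a field equipped with a multiplicative norm making it a nontrivially normed field whose metric is an ultrametric, assume C is complete and algebraically closed, and fix n ≥ 1. Let (f_j)_{j ∈ ℕ} be a countable family of functions f_j : (Fin n →₀ ℕ) → C, each tending to 0 along the cofinite filter (restricted power series in n variables over C), and each having at least one nonzero coefficient. Then there exists x : Fin n → C with ‖x i‖ ≤ 1 for all i such that for every j ∈ ℕ, ∑' k, f_j k * ∏ i, (x i)^(k i) ≠ 0. In other words, the closed unit polydisc of Cⁿ is not covered by the countably many zero loci of the f_j. -/
open Filter

set_option maxHeartbeats 1000000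
set_option linter.unusedSectionVars false
set_option linter.unusedVariables false
set_option linter.unnecessarySimpa false

namespace RPS

open IsUltrametricDist

variable {C : Type*} [NontriviallyNormedField C] [IsUltrametricDist C] [CompleteSpace C]


lemma summable_of_cof {α : Type*} {g : α → C} (hg : Tendsto g cofinite (nhds 0)) :
    Summable g :=
  NonarchimedeanAddGroup.summable_of_tendsto_cofinite_zero hg

lemma cof_mul_le {α : Type*} {g : α → C} (hg : Tendsto g cofinite (nhds 0))
    {u : α → C} (hu : ∀ k, ‖u k‖ ≤ 1) :
    Tendsto (fun k => g k * u k) cofinite (nhds 0) := by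
  refine squeeze_zero_norm (fun k => ?_) (by simpa using hg.norm)
  rw [norm_mul]
  calc ‖g k‖ * ‖u k‖ ≤ ‖g k‖ * 1 :=
        mul_le_mul_of_nonneg_left (hu k) (norm_nonneg _)
    _ = ‖g k‖ := mul_one _

lemma cof_comp {α β : Type*} {g : α → C} (hg : Tendsto g cofinite (nhds 0))
    {e : β → α} (he : Function.Injective e) :
    Tendsto (fun k => g (e k)) cofinite (nhds 0) :=
  hg.comp he.tendsto_cofinite

lemma exists_max {α : Type*} [Nonempty α] {g : α → C} (hg : Tendsto g cofinite (nhds 0)) :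
    ∃ k₀, ∀ k, ‖g k‖ ≤ ‖g k₀‖ := by
  by_cases h : ∀ k, g k = 0
  · exact ⟨Classical.arbitrary α, fun k => by simp [h]⟩
  push_neg at h
  obtain ⟨k₁, hk₁⟩ := h
  have hpos : (0:ℝ) < ‖g k₁‖ := norm_pos_iff.mpr hk₁
  have hfin : {k | ‖g k₁‖ ≤ ‖g k‖}.Finite := by
    have hev : ∀ᶠ k in cofinite, ‖g k‖ < ‖g k₁‖ := by
      have := hg.eventually (Metric.ball_mem_nhds (0:C) hpos)
      filter_upwards [this] with k hk
      simpa [mem_ball_zero_iff] using hk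
    simpa only [not_lt] using Filter.eventually_cofinite.mp hev
  obtain ⟨k₀, hk₀mem, hk₀⟩ := Set.exists_max_image _ (fun k => ‖g k‖) hfin ⟨k₁, by simp⟩
  refine ⟨k₀, fun k => ?_⟩
  by_cases hk : ‖g k₁‖ ≤ ‖g k‖
  · exact hk₀ k hk
  · exact le_trans (le_of_not_ge hk) hk₀mem

lemma norm_tsum_le {α : Type*} {g : α → C} {M : ℝ} (hM : 0 ≤ M) (h : ∀ k, ‖g k‖ ≤ M) :
    ‖∑' k, g k‖ ≤ M :=
  norm_tsum_le_of_forall_le_of_nonneg hM h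

/-- dominant first coefficient implies nonvanishing, one variable -/
lemma one_var_dominant {g : ℕ → C} (hg : Tendsto g cofinite (nhds 0))
    (hdom : ∀ k, 0 < k → ‖g k‖ < ‖g 0‖) {t : C} (ht : ‖t‖ ≤ 1) :
    ∑' k, g k * t ^ k ≠ 0 := by
  have hsum : Summable fun k => g k * t ^ k :=
    summable_of_cof (cof_mul_le hg (fun k => by simpa [norm_pow] using pow_le_one₀ (norm_nonneg t) ht))
  -- tail max
  have htail : Tendsto (fun k => g (k+1)) cofinite (nhds 0) :=
    cof_comp hg (fun a b => by omega)
  obtain ⟨m, hm⟩ := exists_max htail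
  have hmlt : ‖g (m+1)‖ < ‖g 0‖ := hdom _ (Nat.succ_pos m)
  have key : ‖∑' k, g k * t ^ k - g 0‖ < ‖g 0‖ := by
    have h1 : ∑' k, g k * t ^ k = g 0 + ∑' k, g (k+1) * t ^ (k+1) := by
      simpa using Summable.tsum_eq_zero_add hsum
    rw [h1, add_sub_cancel_left]
    have : ‖∑' k, g (k+1) * t ^ (k+1)‖ ≤ ‖g (m+1)‖ := by
      apply norm_tsum_le (norm_nonneg _)
      intro k
      rw [norm_mul]
      calc ‖g (k+1)‖ * ‖t ^ (k+1)‖ ≤ ‖g (k+1)‖ * 1 :=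
            mul_le_mul_of_nonneg_left (by simpa [norm_pow] using pow_le_one₀ (norm_nonneg t) ht) (norm_nonneg _)
        _ = ‖g (k+1)‖ := mul_one _
        _ ≤ ‖g (m+1)‖ := hm k
    exact lt_of_le_of_lt this hmlt
  intro h0
  rw [h0, zero_sub, norm_neg] at key
  exact lt_irrefl _ key


lemma factor {g : ℕ → C} (hg : Tendsto g cofinite (nhds 0)) {a : C} (ha : ‖a‖ ≤ 1)
    (hroot : ∑' k, g k * a ^ k = 0) :
    ∃ b : ℕ → C, Tendsto b cofinite (nhds 0)
      ∧ (∀ j, b j = ∑' i, g (j+1+i) * a ^ i)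
      ∧ (∀ j, b j = g (j+1) + a * b (j+1))
      ∧ ∀ t : C, ‖t‖ ≤ 1 → ∑' k, g k * t ^ k = (t - a) * ∑' j, b j * t ^ j := by
  have hapow : ∀ i : ℕ, ‖a ^ i‖ ≤ 1 := fun i => by
    simpa [norm_pow] using pow_le_one₀ (norm_nonneg a) ha
  set b : ℕ → C := fun j => ∑' i, g (j+1+i) * a ^ i with hbdef
  have hsummand : ∀ j : ℕ, Tendsto (fun i => g (j+1+i) * a ^ i) cofinite (nhds 0) :=
    fun j => cof_mul_le (cof_comp hg (fun x y h => by omega)) hapow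
  have hbsum : ∀ j, Summable fun i => g (j+1+i) * a ^ i := fun j => summable_of_cof (hsummand j)
  -- recurrence b j = g (j+1) + a * b (j+1)
  have hrec : ∀ j, b j = g (j+1) + a * b (j+1) := by
    intro j
    have h1 := Summable.tsum_eq_zero_add (hbsum j)
    have h2 : a * b (j+1) = ∑' i, g (j+1+(i+1)) * a ^ (i+1) := by
      rw [hbdef]
      simp only
      rw [← tsum_mul_left]
      apply tsum_congr
      intro i
      rw [show j+1+(i+1) = j+1+1+i by omega]
      ring
    rw [hbdef]
    simp only
    rw [h1, h2]
    simp
  -- b tends to zero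
  have hbtend : Tendsto b cofinite (nhds 0) := by
    rw [Nat.cofinite_eq_atTop, NormedAddCommGroup.tendsto_nhds_zero]
    intro ε hε
    have hfin : {k | ¬ ‖g k‖ < ε/2}.Finite := by
      apply Filter.eventually_cofinite.mp
      have := hg.eventually (Metric.ball_mem_nhds (0:C) (by linarith : (0:ℝ) < ε/2))
      filter_upwards [this] with k hk
      simpa [mem_ball_zero_iff] using hk
    obtain ⟨J, hJ⟩ := hfin.bddAbove
    filter_upwards [eventually_gt_atTop J] with j hj
    have hb : ‖b j‖ ≤ ε/2 := by
      apply norm_tsum_le (by linarith)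
      intro i
      have hnot : (j+1+i) ∉ {k | ¬ ‖g k‖ < ε/2} := by
        intro hmem
        have := hJ hmem
        omega
      simp only [Set.mem_setOf_eq, not_not] at hnot
      rw [norm_mul]
      calc ‖g (j+1+i)‖ * ‖a ^ i‖ ≤ ‖g (j+1+i)‖ * 1 :=
            mul_le_mul_of_nonneg_left (hapow i) (norm_nonneg _)
        _ = ‖g (j+1+i)‖ := mul_one _
        _ ≤ ε/2 := le_of_lt hnot
    linarith
  refine ⟨b, hbtend, fun j => rfl, hrec, ?_⟩
  intro t ht
  have htpow : ∀ i : ℕ, ‖t ^ i‖ ≤ 1 := fun i => by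
    simpa [norm_pow] using pow_le_one₀ (norm_nonneg t) ht
  set F := ∑' k, g k * t ^ k with hF
  set B := ∑' j, b j * t ^ j with hB
  have sg : Summable fun k => g k * t ^ k := summable_of_cof (cof_mul_le hg htpow)
  have sb : Summable fun j => b j * t ^ j := summable_of_cof (cof_mul_le hbtend htpow)
  have sgs : Summable fun j => g (j+1) * t ^ (j+1) :=
    summable_of_cof (cof_mul_le (cof_comp hg (fun x y h => by omega)) (fun j => htpow (j+1)))
  have sbs : Summable fun j => b (j+1) * t ^ (j+1) :=
    summable_of_cof (cof_mul_le (cof_comp hbtend (fun x y h => by omega)) (fun j => htpow (j+1)))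
  have sab : Summable fun j => a * b (j+1) * t ^ (j+1) := by
    have := sbs.mul_left a
    apply this.congr
    intro j; ring
  -- t * B
  have e1 : t * B = ∑' j, b j * t ^ (j+1) := by
    rw [hB, ← tsum_mul_left]
    apply tsum_congr; intro j; ring
  have e2 : ∑' j, b j * t ^ (j+1) = (∑' j, g (j+1) * t ^ (j+1)) + ∑' j, a * b (j+1) * t ^ (j+1) := by
    rw [← Summable.tsum_add sgs sab]
    apply tsum_congr; intro j
    rw [hrec j]; ring
  have e3 : ∑' j, g (j+1) * t ^ (j+1) = F - g 0 := by
    have := Summable.tsum_eq_zero_add sg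
    simp only [pow_zero, mul_one] at this
    rw [hF, this]; ring
  have e4 : ∑' j, a * b (j+1) * t ^ (j+1) = a * (B - b 0) := by
    have h5 := Summable.tsum_eq_zero_add sb
    simp only [pow_zero, mul_one] at h5
    have h6 : ∑' j, a * b (j+1) * t ^ (j+1) = a * ∑' j, b (j+1) * t ^ (j+1) := by
      rw [← tsum_mul_left]
      apply tsum_congr; intro j; ring
    rw [h6, hB, h5]; ring
  -- root relation : g 0 + a * b 0 = 0
  have e5 : g 0 + a * b 0 = 0 := by
    have h7 : Summable fun k => g k * a ^ k := summable_of_cof (cof_mul_le hg hapow)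
    have h8 := Summable.tsum_eq_zero_add h7
    simp only [pow_zero, mul_one] at h8
    have h9 : a * b 0 = ∑' k, g (k+1) * a ^ (k+1) := by
      rw [hbdef]
      simp only
      rw [← tsum_mul_left]
      apply tsum_congr; intro i
      rw [show 0+1+i = i+1 by omega]
      ring
    rw [h9, ← h8, hroot]
  have e6 : t * B = (F - g 0) + a * (B - b 0) := by rw [e1, e2, e3, e4]
  linear_combination -e6 + e5


lemma strassman_aux : ∀ N : ℕ, ∀ g : ℕ → C, Tendsto g cofinite (nhds 0) → 0 < ‖g N‖ →
    (∀ k, ‖g k‖ ≤ ‖g N‖) → (∀ k, N < k → ‖g k‖ < ‖g N‖) →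
    {t : C | ‖t‖ ≤ 1 ∧ ∑' k, g k * t ^ k = 0}.Finite := by
  intro N
  induction N with
  | zero =>
    intro g hg hpos hle hlt
    convert Set.finite_empty
    rw [Set.eq_empty_iff_forall_notMem]
    rintro t ⟨ht1, ht2⟩
    exact one_var_dominant hg (fun k hk => hlt k hk) ht1 ht2
  | succ N ih =>
    intro g hg hpos hle hlt
    rcases Set.eq_empty_or_nonempty {t : C | ‖t‖ ≤ 1 ∧ ∑' k, g k * t ^ k = 0} with hz | hz
    · rw [hz]; exact Set.finite_empty
    obtain ⟨a, ha1, ha2⟩ := hz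
    obtain ⟨b, hbt, hbf, hbrec, hbid⟩ := factor hg ha1 ha2
    have hapow : ∀ i : ℕ, ‖a ^ i‖ ≤ 1 := fun i => by
      simpa [norm_pow] using pow_le_one₀ (norm_nonneg a) ha1
    -- max of the tail beyond N+1
    obtain ⟨m, hm⟩ := exists_max (cof_comp hg (fun x y h => by simp only [add_right_inj] at h; exact h : Function.Injective (fun i => N+2+i)))
    have hm2 : ‖g (N+2+m)‖ < ‖g (N+1)‖ := hlt _ (by omega)
    -- b j small for j ≥ N+1
    have hbsmall : ∀ j, N+1 ≤ j → ‖b j‖ ≤ ‖g (N+2+m)‖ := by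
      intro j hj
      rw [hbf]
      apply norm_tsum_le (norm_nonneg _)
      intro i
      rw [norm_mul]
      calc ‖g (j+1+i)‖ * ‖a ^ i‖ ≤ ‖g (j+1+i)‖ * 1 :=
            mul_le_mul_of_nonneg_left (hapow i) (norm_nonneg _)
        _ = ‖g (j+1+i)‖ := mul_one _
        _ ≤ ‖g (N+2+m)‖ := by
            have h3 : j+1+i = N+2+(j+1+i-(N+2)) := by omega
            rw [h3]; exact hm _
    -- norm of b N equals norm of g (N+1)
    have hbN : ‖b N‖ = ‖g (N+1)‖ := by
      rw [hbrec N]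
      have h4 : ‖a * b (N+1)‖ < ‖g (N+1)‖ := by
        rw [norm_mul]
        calc ‖a‖ * ‖b (N+1)‖ ≤ 1 * ‖b (N+1)‖ :=
              mul_le_mul_of_nonneg_right ha1 (norm_nonneg _)
          _ = ‖b (N+1)‖ := one_mul _
          _ ≤ ‖g (N+2+m)‖ := hbsmall _ le_rfl
          _ < ‖g (N+1)‖ := hm2
      rw [norm_add_eq_max_of_norm_ne_norm (ne_of_gt h4)]
      exact max_eq_left h4.le
    -- hypotheses for ih
    have hble : ∀ k, ‖b k‖ ≤ ‖b N‖ := by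
      intro k
      rw [hbN, hbf]
      apply norm_tsum_le (norm_nonneg _)
      intro i
      rw [norm_mul]
      calc ‖g (k+1+i)‖ * ‖a ^ i‖ ≤ ‖g (k+1+i)‖ * 1 :=
            mul_le_mul_of_nonneg_left (hapow i) (norm_nonneg _)
        _ = ‖g (k+1+i)‖ := mul_one _
        _ ≤ ‖g (N+1)‖ := hle _
    have hblt : ∀ k, N < k → ‖b k‖ < ‖b N‖ := by
      intro k hk
      rw [hbN]
      exact lt_of_le_of_lt (hbsmall k (by omega)) hm2
    have hbpos : 0 < ‖b N‖ := by rw [hbN]; exact hpos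
    have hfinb := ih b hbt hbpos hble hblt
    apply Set.Finite.subset (hfinb.insert a)
    rintro t ⟨ht1, ht2⟩
    rcases eq_or_ne t a with rfl | hta
    · exact Set.mem_insert _ _
    · apply Set.mem_insert_of_mem
      refine ⟨ht1, ?_⟩
      have h5 := hbid t ht1
      rw [ht2] at h5
      rcases mul_eq_zero.mp h5.symm with h6 | h6
      · exact absurd (sub_eq_zero.mp h6) hta
      · exact h6

lemma one_var_zeros_finite {g : ℕ → C} (hg : Tendsto g cofinite (nhds 0))
    (hne : ∃ k, g k ≠ 0) :
    {t : C | ‖t‖ ≤ 1 ∧ ∑' k, g k * t ^ k = 0}.Finite := by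
  obtain ⟨k₀, hk₀⟩ := exists_max hg
  obtain ⟨k₁, hk₁⟩ := hne
  have hk₀pos : 0 < ‖g k₀‖ := lt_of_lt_of_le (norm_pos_iff.mpr hk₁) (hk₀ k₁)
  have hfin : {k | ‖g k₀‖ ≤ ‖g k‖}.Finite := by
    have hev : ∀ᶠ k in cofinite, ‖g k‖ < ‖g k₀‖ := by
      have := hg.eventually (Metric.ball_mem_nhds (0:C) hk₀pos)
      filter_upwards [this] with k hk
      simpa [mem_ball_zero_iff] using hk
    simpa only [not_lt] using Filter.eventually_cofinite.mp hev
  obtain ⟨N, hNmem, hNmax⟩ := Set.exists_max_image _ id hfin ⟨k₀, by simp⟩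
  have hN : ‖g N‖ = ‖g k₀‖ := le_antisymm (hk₀ N) hNmem
  apply strassman_aux N g hg
  · rw [hN]; exact hk₀pos
  · intro k; rw [hN]; exact hk₀ k
  · intro k hk
    rw [hN]
    by_contra hcon
    push_neg at hcon
    have : k ∈ {k | ‖g k₀‖ ≤ ‖g k‖} := hcon
    have := hNmax k this
    simp only [id] at this
    omega

lemma one_var_density {g : ℕ → C} (hg : Tendsto g cofinite (nhds 0))
    (hne : ∃ k, g k ≠ 0) {a : C} (ha : ‖a‖ ≤ 1) {ε : ℝ} (hε : 0 < ε) :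
    ∃ t : C, ‖t‖ ≤ 1 ∧ ‖t - a‖ ≤ ε ∧ ∑' k, g k * t ^ k ≠ 0 := by
  obtain ⟨c, hc0, hc1⟩ := NormedField.exists_norm_lt_one C
  obtain ⟨M, hM⟩ := exists_pow_lt_of_lt_one hε hc1
  have hcne : c ≠ 0 := norm_pos_iff.mp hc0
  have hball : {t : C | ‖t‖ ≤ 1 ∧ ‖t - a‖ ≤ ε}.Infinite := by
    apply Set.infinite_of_injective_forall_mem (f := fun m : ℕ => a + c ^ (M + m))
    · intro x y hxy
      simp only [add_right_inj] at hxy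
      have hn7 : ‖c‖ ^ (M+x) = ‖c‖ ^ (M+y) := by
        rw [← norm_pow, ← norm_pow, hxy]
      by_contra hne'
      rcases Nat.lt_or_ge (M+x) (M+y) with h | h
      · exact absurd hn7 (ne_of_gt (pow_lt_pow_right_of_lt_one₀ hc0 hc1 h))
      · have h' : M + y < M + x := by omega
        exact absurd hn7 (ne_of_lt (pow_lt_pow_right_of_lt_one₀ hc0 hc1 h'))
    · intro m
      constructor
      · calc ‖a + c ^ (M+m)‖ ≤ max ‖a‖ ‖c ^ (M+m)‖ := norm_add_le_max _ _
          _ ≤ 1 := by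
            apply max_le ha
            rw [norm_pow]
            exact pow_le_one₀ hc0.le hc1.le
      · have : a + c ^ (M+m) - a = c ^ (M+m) := by ring
        rw [this, norm_pow]
        calc ‖c‖ ^ (M+m) ≤ ‖c‖ ^ M := pow_le_pow_of_le_one hc0.le hc1.le (by omega)
          _ ≤ ε := hM.le
  have hzero := one_var_zeros_finite hg hne
  obtain ⟨t, htmem, htnot⟩ := (hball.diff hzero).nonempty
  refine ⟨t, htmem.1, htmem.2, ?_⟩
  intro hcon
  exact htnot ⟨htmem.1, hcon⟩


lemma norm_monomial_le {n : ℕ} {x : Fin n → C} (hx : ∀ i, ‖x i‖ ≤ 1) (k : Fin n → ℕ) :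
    ‖∏ i, x i ^ k i‖ ≤ 1 := by
  rw [norm_prod]
  apply Finset.prod_le_one (fun i _ => norm_nonneg _)
  intro i _
  simpa [norm_pow] using pow_le_one₀ (norm_nonneg (x i)) (hx i)

lemma density (n : ℕ) :
    ∀ g : (Fin n → ℕ) → C, Tendsto g cofinite (nhds 0) → (∃ k, g k ≠ 0) →
    ∀ a : Fin n → C, (∀ i, ‖a i‖ ≤ 1) → ∀ ε : ℝ, 0 < ε →
    ∃ x : Fin n → C, (∀ i, ‖x i‖ ≤ 1) ∧ (∀ i, ‖x i - a i‖ ≤ ε) ∧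
      ∑' k, g k * ∏ i, x i ^ k i ≠ 0 := by
  induction n with
  | zero =>
    rintro g hg ⟨k₁, hk₁⟩ a ha ε hε
    refine ⟨a, ha, fun i => i.elim0, ?_⟩
    rw [tsum_eq_single k₁ (fun k hk => absurd (Subsingleton.elim k k₁) hk)]
    simpa using hk₁
  | succ n ih =>
    rintro g hg ⟨k₁, hk₁⟩ a ha ε hε
    set G : ℕ → (Fin n → ℕ) → C := fun d k' => g (Fin.cons d k') with hGdef
    have hGcof : ∀ d, Tendsto (G d) cofinite (nhds 0) :=
      fun d => cof_comp hg (Fin.cons_right_injective (α := fun _ : Fin (n+1) => ℕ) d)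
    have hGne : ∃ k', G (k₁ 0) k' ≠ 0 := ⟨Fin.tail k₁, by
      rw [hGdef]; simpa [Fin.cons_self_tail] using hk₁⟩
    obtain ⟨x', hx'1, hx'2, hx'A⟩ :=
      ih (G (k₁ 0)) (hGcof (k₁ 0)) hGne (fun i => a i.succ) (fun i => ha i.succ) ε hε
    set c : ℕ → C := fun d => ∑' k', G d k' * ∏ i, x' i ^ k' i with hcdef
    have hccof : Tendsto c cofinite (nhds 0) := by
      rw [NormedAddCommGroup.tendsto_nhds_zero]
      intro δ hδ
      apply Filter.eventually_cofinite.mpr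
      have hfin : {k : Fin (n+1) → ℕ | ¬ ‖g k‖ < δ/2}.Finite := by
        apply Filter.eventually_cofinite.mp
        have := hg.eventually (Metric.ball_mem_nhds (0:C) (by linarith : (0:ℝ) < δ/2))
        filter_upwards [this] with k hk
        simpa [mem_ball_zero_iff] using hk
      apply Set.Finite.subset (hfin.image (fun k => k 0))
      intro d hd
      simp only [Set.mem_setOf_eq, not_lt, not_le] at hd
      by_contra hdim
      have hall : ∀ k' : Fin n → ℕ, ‖g (Fin.cons d k')‖ < δ/2 := by
        intro k'
        by_contra hcon
        apply hdim
        exact ⟨Fin.cons d k', hcon, rfl⟩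
      have : ‖c d‖ ≤ δ/2 := by
        rw [hcdef]
        apply norm_tsum_le (by linarith)
        intro k'
        rw [norm_mul]
        calc ‖G d k'‖ * ‖∏ i, x' i ^ k' i‖ ≤ ‖G d k'‖ * 1 :=
              mul_le_mul_of_nonneg_left (norm_monomial_le hx'1 k') (norm_nonneg _)
          _ = ‖G d k'‖ := mul_one _
          _ ≤ δ/2 := (hall k').le
      linarith
    have hcne : ∃ d, c d ≠ 0 := ⟨k₁ 0, hx'A⟩
    obtain ⟨t, ht1, ht2, htF⟩ := one_var_density hccof hcne (ha 0) hε
    refine ⟨Fin.cons t x', ?_, ?_, ?_⟩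
    · intro i
      induction i using Fin.cases with
      | zero => simpa using ht1
      | succ i => simpa using hx'1 i
    · intro i
      induction i using Fin.cases with
      | zero => simpa using ht2
      | succ i => simpa using hx'2 i
    have hinj : Function.Injective (fun p : ℕ × (Fin n → ℕ) => (Fin.cons p.1 p.2 : Fin (n+1) → ℕ)) := by
      intro p q h
      have h0 := congrFun h 0
      simp only [Fin.cons_zero] at h0
      have h1 : p.2 = q.2 := by
        funext i
        have h2 := congrFun h i.succ
        simpa [Fin.cons_succ] using h2
      exact Prod.ext h0 h1
    have hsum2 : Summable (fun p : ℕ × (Fin n → ℕ) => (G p.1 p.2 * ∏ i, x' i ^ p.2 i) * t ^ p.1) := by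
      apply summable_of_cof
      have base : Tendsto (fun p : ℕ × (Fin n → ℕ) => g (Fin.cons p.1 p.2)) cofinite (nhds 0) :=
        cof_comp hg hinj
      have hb := cof_mul_le base (u := fun p : ℕ × (Fin n → ℕ) => (∏ i, x' i ^ p.2 i) * t ^ p.1)
        (fun p => by
          rw [norm_mul]
          have h3 : ‖∏ i, x' i ^ p.2 i‖ ≤ 1 := norm_monomial_le hx'1 p.2
          have h4 : ‖t ^ p.1‖ ≤ 1 := by
            simpa [norm_pow] using pow_le_one₀ (norm_nonneg t) ht1
          calc ‖∏ i, x' i ^ p.2 i‖ * ‖t ^ p.1‖ ≤ 1 * 1 :=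
                mul_le_mul h3 h4 (norm_nonneg _) zero_le_one
            _ = 1 := one_mul 1)
      apply hb.congr
      intro p
      rw [hGdef]
      ring
    have hinner : ∀ d, Summable fun k' : Fin n → ℕ => (G d k' * ∏ i, x' i ^ k' i) * t ^ d :=
      fun d => Summable.mul_right _
        (summable_of_cof (cof_mul_le (hGcof d) (fun k' => norm_monomial_le hx'1 k')))
    have hEq1 : ∑' p : ℕ × (Fin n → ℕ),
          (fun k : Fin (n+1) → ℕ => g k * ∏ i, (Fin.cons t x' : Fin (n+1) → C) i ^ k i)
            ((Fin.consEquiv (fun _ : Fin (n+1) => ℕ)) p)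
        = ∑' k : Fin (n+1) → ℕ, g k * ∏ i, (Fin.cons t x' : Fin (n+1) → C) i ^ k i :=
      (Fin.consEquiv (fun _ : Fin (n+1) => ℕ)).tsum_eq
        (fun k : Fin (n+1) → ℕ => g k * ∏ i, (Fin.cons t x' : Fin (n+1) → C) i ^ k i)
    have step1 : ∀ p : ℕ × (Fin n → ℕ),
        (fun k : Fin (n+1) → ℕ => g k * ∏ i, (Fin.cons t x' : Fin (n+1) → C) i ^ k i)
            ((Fin.consEquiv (fun _ : Fin (n+1) => ℕ)) p)
          = (G p.1 p.2 * ∏ i, x' i ^ p.2 i) * t ^ p.1 := by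
      rintro ⟨d, k'⟩
      simp only [Fin.consEquiv, Equiv.coe_fn_mk]
      rw [Fin.prod_univ_succ]
      simp only [Fin.cons_zero, Fin.cons_succ]
      rw [hGdef]
      ring
    have hEq2 : ∑' p : ℕ × (Fin n → ℕ),
          (fun k : Fin (n+1) → ℕ => g k * ∏ i, (Fin.cons t x' : Fin (n+1) → C) i ^ k i)
            ((Fin.consEquiv (fun _ : Fin (n+1) => ℕ)) p)
        = ∑' p : ℕ × (Fin n → ℕ), (G p.1 p.2 * ∏ i, x' i ^ p.2 i) * t ^ p.1 :=
      tsum_congr step1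
    have hEq3 : ∑' p : ℕ × (Fin n → ℕ), (G p.1 p.2 * ∏ i, x' i ^ p.2 i) * t ^ p.1
        = ∑' d, ∑' k' : Fin n → ℕ, (G d k' * ∏ i, x' i ^ k' i) * t ^ d :=
      Summable.tsum_prod' hsum2 hinner
    have hEq4 : ∑' d, (∑' k' : Fin n → ℕ, (G d k' * ∏ i, x' i ^ k' i) * t ^ d)
        = ∑' d, c d * t ^ d := by
      apply tsum_congr
      intro d
      rw [tsum_mul_right, hcdef]
    have key : ∑' k : Fin (n+1) → ℕ, g k * ∏ i, (Fin.cons t x' : Fin (n+1) → C) i ^ k i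
        = ∑' d, c d * t ^ d :=
      hEq1.symm.trans (hEq2.trans (hEq3.trans hEq4))
    rw [key]
    exact htF


lemma pow_sub_pow_norm_le {u v : C} (hu : ‖u‖ ≤ 1) (hv : ‖v‖ ≤ 1) (m : ℕ) :
    ‖u ^ m - v ^ m‖ ≤ ‖u - v‖ := by
  induction m with
  | zero => simpa using norm_nonneg _
  | succ m ihm =>
    have hid : u ^ (m+1) - v ^ (m+1) = u * (u ^ m - v ^ m) + (u - v) * v ^ m := by ring
    rw [hid]
    apply le_trans (norm_add_le_max _ _)
    apply max_le
    · rw [norm_mul]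
      calc ‖u‖ * ‖u ^ m - v ^ m‖ ≤ 1 * ‖u - v‖ :=
            mul_le_mul hu ihm (norm_nonneg _) zero_le_one
        _ = ‖u - v‖ := one_mul _
    · rw [norm_mul]
      calc ‖u - v‖ * ‖v ^ m‖ ≤ ‖u - v‖ * 1 := by
            apply mul_le_mul_of_nonneg_left _ (norm_nonneg _)
            simpa [norm_pow] using pow_le_one₀ (norm_nonneg v) hv
        _ = ‖u - v‖ := mul_one _

lemma prod_sub_prod_norm_le {ι : Type*} (s : Finset ι) (u v : ι → C) {δ : ℝ} (hδ : 0 ≤ δ)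
    (hu : ∀ i ∈ s, ‖u i‖ ≤ 1) (hv : ∀ i ∈ s, ‖v i‖ ≤ 1) (h : ∀ i ∈ s, ‖u i - v i‖ ≤ δ) :
    ‖∏ i ∈ s, u i - ∏ i ∈ s, v i‖ ≤ δ := by
  induction s using Finset.cons_induction with
  | empty => simpa using hδ
  | cons a s ha ih =>
    rw [Finset.prod_cons, Finset.prod_cons]
    have hid : u a * ∏ i ∈ s, u i - v a * ∏ i ∈ s, v i
        = u a * (∏ i ∈ s, u i - ∏ i ∈ s, v i) + (u a - v a) * ∏ i ∈ s, v i := by ring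
    rw [hid]
    apply le_trans (norm_add_le_max _ _)
    have hprodv : ‖∏ i ∈ s, v i‖ ≤ 1 := by
      rw [norm_prod]
      exact Finset.prod_le_one (fun i _ => norm_nonneg _)
        (fun i hi => hv i (Finset.mem_cons_of_mem hi))
    apply max_le
    · rw [norm_mul]
      calc ‖u a‖ * ‖∏ i ∈ s, u i - ∏ i ∈ s, v i‖ ≤ 1 * δ := by
            apply mul_le_mul (hu a (Finset.mem_cons_self a s))
              (ih (fun i hi => hu i (Finset.mem_cons_of_mem hi))
                  (fun i hi => hv i (Finset.mem_cons_of_mem hi))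
                  (fun i hi => h i (Finset.mem_cons_of_mem hi)))
              (norm_nonneg _) zero_le_one
        _ = δ := one_mul _
    · rw [norm_mul]
      calc ‖u a - v a‖ * ‖∏ i ∈ s, v i‖ ≤ δ * 1 :=
            mul_le_mul (h a (Finset.mem_cons_self a s)) hprodv (norm_nonneg _) hδ
        _ = δ := mul_one _

lemma eval_sub_le {n : ℕ} {g : (Fin n → ℕ) → C} (hg : Tendsto g cofinite (nhds 0))
    {M : ℝ} (hM : 0 ≤ M) (hgM : ∀ k, ‖g k‖ ≤ M)
    {x y : Fin n → C} (hx : ∀ i, ‖x i‖ ≤ 1) (hy : ∀ i, ‖y i‖ ≤ 1)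
    {δ : ℝ} (hδ : 0 ≤ δ) (hxy : ∀ i, ‖x i - y i‖ ≤ δ) :
    ‖(∑' k, g k * ∏ i, x i ^ k i) - ∑' k, g k * ∏ i, y i ^ k i‖ ≤ M * δ := by
  have sx : Summable fun k => g k * ∏ i, x i ^ k i :=
    summable_of_cof (cof_mul_le hg (norm_monomial_le hx))
  have sy : Summable fun k => g k * ∏ i, y i ^ k i :=
    summable_of_cof (cof_mul_le hg (norm_monomial_le hy))
  rw [← Summable.tsum_sub sx sy]
  apply norm_tsum_le (by positivity)
  intro k
  have hterm : g k * ∏ i, x i ^ k i - g k * ∏ i, y i ^ k i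
      = g k * (∏ i, x i ^ k i - ∏ i, y i ^ k i) := by ring
  rw [hterm, norm_mul]
  apply mul_le_mul (hgM k) _ (norm_nonneg _) hM
  apply prod_sub_prod_norm_le Finset.univ _ _ hδ
  · intro i _
    simpa [norm_pow] using pow_le_one₀ (norm_nonneg (x i)) (hx i)
  · intro i _
    simpa [norm_pow] using pow_le_one₀ (norm_nonneg (y i)) (hy i)
  · intro i _
    exact le_trans (pow_sub_pow_norm_le (hx i) (hy i) (k i)) (hxy i)


end RPS

open RPS in
/-- Over a complete, algebraically closed, nonarchimedean nontrivially normed field `C`,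
the closed unit polydisc in `n ≥ 1` variables is not covered by the zero loci of
countably many nonzero restricted power series: there is a point of the closed unit
polydisc at which none of them vanish. -/
theorem closedUnitPolydisc_not_countable_union_of_zero_loci (C : Type*)
    [NontriviallyNormedField C] [IsUltrametricDist C] [CompleteSpace C] [IsAlgClosed C]
    (n : ℕ) (hn : 1 ≤ n) (f : ℕ → (Fin n →₀ ℕ) → C)
    (hf : ∀ j, Tendsto (f j) cofinite (nhds 0))
    (hne : ∀ j, ∃ k₀, f j k₀ ≠ 0) :
    ∃ x : Fin n → C, (∀ i, ‖x i‖ ≤ 1) ∧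
      ∀ j, ∑' k, f j k * ∏ i, x i ^ (k i) ≠ 0 := by
  classical
  -- transfer to plain functions
  set g : ℕ → (Fin n → ℕ) → C :=
    fun j k => f j (Finsupp.equivFunOnFinite.symm k) with hgdef
  have hgcof : ∀ j, Tendsto (g j) cofinite (nhds 0) :=
    fun j => cof_comp (hf j) Finsupp.equivFunOnFinite.symm.injective
  have hgne : ∀ j, ∃ k, g j k ≠ 0 := by
    intro j
    obtain ⟨k₀, hk₀⟩ := hne j
    exact ⟨Finsupp.equivFunOnFinite k₀, by simpa [hgdef] using hk₀⟩
  have hconv : ∀ j (x : Fin n → C),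
      ∑' k : Fin n →₀ ℕ, f j k * ∏ i, x i ^ (k i)
        = ∑' k : Fin n → ℕ, g j k * ∏ i, x i ^ k i := by
    intro j x
    rw [← Finsupp.equivFunOnFinite.symm.tsum_eq
      (fun k : Fin n →₀ ℕ => f j k * ∏ i, x i ^ (k i))]
    apply tsum_congr
    intro k
    simp [hgdef]
  -- the closed polydisc as a subtype
  set S : Set (Fin n → C) := {x | ∀ i, ‖x i‖ ≤ 1} with hSdef
  have hSclosed : IsClosed S := by
    have : S = ⋂ i, {x : Fin n → C | ‖x i‖ ≤ 1} := by
      ext x; simp [hSdef]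
    rw [this]
    apply isClosed_iInter
    intro i
    exact isClosed_le (by fun_prop) continuous_const
  haveI : CompleteSpace S := hSclosed.completeSpace_coe
  haveI : Nonempty S := ⟨⟨0, fun i => by simp⟩⟩
  set U : ℕ → Set S := fun j =>
    {x : S | ∑' k : Fin n → ℕ, g j k * ∏ i, (x : Fin n → C) i ^ k i ≠ 0} with hUdef
  have hUopen : ∀ j, IsOpen (U j) := by
    intro j
    rw [Metric.isOpen_iff]
    intro x hx
    obtain ⟨k₀, hk₀⟩ := exists_max (hgcof j)
    set M := ‖g j k₀‖ with hMdef
    have hMpos : 0 < M := by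
      rcases lt_or_eq_of_le (norm_nonneg (g j k₀)) with h | h
      · exact h
      · exfalso
        apply hx
        have : ∀ k, g j k = 0 := by
          intro k
          have h2 := hk₀ k
          rw [hMdef, ← h] at h2
          exact norm_le_zero_iff.mp h2
        simp [this]
    set Fx := ∑' k : Fin n → ℕ, g j k * ∏ i, (x : Fin n → C) i ^ k i with hFxdef
    have hFxpos : 0 < ‖Fx‖ := norm_pos_iff.mpr hx
    refine ⟨‖Fx‖ / M, by positivity, ?_⟩
    intro y hy
    rw [Metric.mem_ball] at hy
    intro hy0
    have hdist : ∀ i, ‖(y : Fin n → C) i - (x : Fin n → C) i‖ ≤ dist y x := by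
      intro i
      rw [Subtype.dist_eq] at *
      simpa [dist_eq_norm] using dist_le_pi_dist (y : Fin n → C) (x : Fin n → C) i
    have hkey := eval_sub_le (hgcof j) hMpos.le hk₀ y.2 x.2 dist_nonneg hdist
    rw [hy0, ← hFxdef, zero_sub, norm_neg] at hkey
    have : M * dist y x < M * (‖Fx‖ / M) := by
      apply mul_lt_mul_of_pos_left hy hMpos
    rw [mul_div_cancel₀ _ (ne_of_gt hMpos)] at this
    linarith
  have hUdense : ∀ j, Dense (U j) := by
    intro j
    rw [Metric.dense_iff]
    intro x r hr
    obtain ⟨y, hy1, hy2, hy3⟩ :=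
      density n (g j) (hgcof j) (hgne j) (x : Fin n → C) x.2 (r/2) (by linarith)
    refine ⟨⟨y, hy1⟩, ?_, hy3⟩
    rw [Metric.mem_ball, Subtype.dist_eq]
    have : dist y (x : Fin n → C) ≤ r/2 := by
      rw [dist_pi_le_iff (by linarith)]
      intro i
      rw [dist_eq_norm]
      exact hy2 i
    linarith
  have hdense := dense_iInter_of_isOpen hUopen hUdense
  obtain ⟨x, hxmem⟩ := hdense.nonempty
  refine ⟨(x : Fin n → C), x.2, ?_⟩
  intro j
  rw [hconv j]
  exact Set.mem_iInter.mp hxmem j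
end
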